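/- If A ∈ ℝ^{2d_A×2d_A} and B ∈ ℝ^{2d_B×2d_B} are symmetric and commute with J_{d_A} and J_{d_B} respectively, and L, R are symmetric real matrices of matching sizes, then tr((A ⊗_R B)(L ⊗ R)) = (1/2)·tr(AL)·tr(BR) = (1/2)·tr((A ⊗ B)(L ⊗ R)). -/
import Mathlib


open Kronecker Matrix

/-- 2×2 rotation matrix J = [[0,-1],[1,0]]. -/
def Jmat : Matrix (Fin 2) (Fin 2) ℝ := !![0, -1; 1, 0]

/-- Entrywise real part of a complex matrix. -/
def reM {d : ℕ} (A : Matrix (Fin d) (Fin d) ℂ) : Matrix (Fin d) (Fin d) ℝ :=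
  A.map Complex.re

/-- Entrywise imaginary part of a complex matrix. -/
def imM {d : ℕ} (A : Matrix (Fin d) (Fin d) ℂ) : Matrix (Fin d) (Fin d) ℝ :=
  A.map Complex.im

/-- The standard complex-to-real mapping Γ(A) = I ⊗ Re(A) + J ⊗ Im(A). -/
def Gamma {d : ℕ} (A : Matrix (Fin d) (Fin d) ℂ) :
    Matrix (Fin 2 × Fin d) (Fin 2 × Fin d) ℝ :=
  (1 : Matrix (Fin 2) (Fin 2) ℝ) ⊗ₖ reM A + Jmat ⊗ₖ imM A

/-- The projector P = (1/2)(1 − J_{d_A} ⊗ J_{d_B}) implementing I⁽²⁾ ⊗ 1 after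
permutation of tensor factors. -/
noncomputable def Pproj (dA dB : ℕ) :
    Matrix ((Fin 2 × Fin dA) × (Fin 2 × Fin dB)) ((Fin 2 × Fin dA) × (Fin 2 × Fin dB)) ℝ :=
  (1 / 2 : ℝ) •
    (1 - (Jmat ⊗ₖ (1 : Matrix (Fin dA) (Fin dA) ℝ)) ⊗ₖ
      (Jmat ⊗ₖ (1 : Matrix (Fin dB) (Fin dB) ℝ)))

/-- The R-product A ⊗_R B := P (A ⊗ B) P. -/
noncomputable def Rprod {dA dB : ℕ}
    (A : Matrix (Fin 2 × Fin dA) (Fin 2 × Fin dA) ℝ)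
    (B : Matrix (Fin 2 × Fin dB) (Fin 2 × Fin dB) ℝ) :
    Matrix ((Fin 2 × Fin dA) × (Fin 2 × Fin dB)) ((Fin 2 × Fin dA) × (Fin 2 × Fin dB)) ℝ :=
  Pproj dA dB * (A ⊗ₖ B) * Pproj dA dB

lemma neg_kron {l m n p : Type*} (A : Matrix l m ℝ) (B : Matrix n p ℝ) :
    (-A) ⊗ₖ B = -(A ⊗ₖ B) := by
  rw [← neg_one_smul ℝ A, Matrix.smul_kronecker, neg_one_smul]

lemma kron_neg {l m n p : Type*} (A : Matrix l m ℝ) (B : Matrix n p ℝ) :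
    A ⊗ₖ (-B) = -(A ⊗ₖ B) := by
  rw [← neg_one_smul ℝ B, Matrix.kronecker_smul, neg_one_smul]

lemma Jmat_sq : Jmat * Jmat = -1 := by
  ext i j
  fin_cases i <;> fin_cases j <;>
    simp [Matrix.mul_apply, Fin.sum_univ_two, Jmat, Matrix.one_apply]

lemma Jmat_transpose : Jmatᵀ = -Jmat := by
  ext i j
  fin_cases i <;> fin_cases j <;> simp [Jmat]

/-- tr(A*J*L)=0 when A,L symmetric, J antisymmetric, A*J=J*A -/
lemma trace_AJL {n : Type*} [Fintype n] [DecidableEq n]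
    (A J L : Matrix n n ℝ) (hA : A.IsSymm) (hL : L.IsSymm) (hJ : Jᵀ = -J)
    (hAJ : A * J = J * A) : (A * J * L).trace = 0 := by
  have h2 : (A * J * L)ᵀ = -(L * J * A) := by
    rw [Matrix.transpose_mul, Matrix.transpose_mul, hJ, hA.eq, hL.eq]
    noncomm_ring
  have h1 : (A * J * L).trace = -(L * J * A).trace := by
    rw [← Matrix.trace_transpose (A * J * L), h2, Matrix.trace_neg]
  have h3 : L * J * A = L * (A * J) := by rw [Matrix.mul_assoc, ← hAJ]
  rw [h3, Matrix.trace_mul_comm, ← Matrix.mul_assoc] at h1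
  have h4 : (A * J * L).trace = (L * A * J).trace := by
    rw [Matrix.trace_mul_comm (A * J) L, ← Matrix.mul_assoc]
  linarith

theorem trace_Rprod_factorises {dA dB : ℕ}
    (A L : Matrix (Fin 2 × Fin dA) (Fin 2 × Fin dA) ℝ)
    (B R : Matrix (Fin 2 × Fin dB) (Fin 2 × Fin dB) ℝ)
    (hA : A.IsSymm) (hB : B.IsSymm)
    (hAJ : A * (Jmat ⊗ₖ (1 : Matrix (Fin dA) (Fin dA) ℝ))
      = (Jmat ⊗ₖ (1 : Matrix (Fin dA) (Fin dA) ℝ)) * A)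
    (hBJ : B * (Jmat ⊗ₖ (1 : Matrix (Fin dB) (Fin dB) ℝ))
      = (Jmat ⊗ₖ (1 : Matrix (Fin dB) (Fin dB) ℝ)) * B)
    (hL : L.IsSymm) (hR : R.IsSymm) :
    (Rprod A B * (L ⊗ₖ R)).trace = (1 / 2 : ℝ) * (A * L).trace * (B * R).trace ∧
    (Rprod A B * (L ⊗ₖ R)).trace = (1 / 2 : ℝ) * ((A ⊗ₖ B) * (L ⊗ₖ R)).trace := by
  set JA := Jmat ⊗ₖ (1 : Matrix (Fin dA) (Fin dA) ℝ) with hJAdef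
  set JB := Jmat ⊗ₖ (1 : Matrix (Fin dB) (Fin dB) ℝ) with hJBdef
  set K := JA ⊗ₖ JB with hKdef
  have hJAt : JAᵀ = -JA := by
    rw [hJAdef, ← Matrix.kroneckerMap_transpose, Jmat_transpose, Matrix.transpose_one, neg_kron]
  have hJAsq : JA * JA = -1 := by
    rw [hJAdef, ← Matrix.mul_kronecker_mul, Jmat_sq, Matrix.one_mul, neg_kron,
      Matrix.one_kronecker_one]
  have hJBsq : JB * JB = -1 := by
    rw [hJBdef, ← Matrix.mul_kronecker_mul, Jmat_sq, Matrix.one_mul, neg_kron,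
      Matrix.one_kronecker_one]
  have hKsq : K * K = 1 := by
    rw [hKdef, ← Matrix.mul_kronecker_mul, hJAsq, hJBsq, neg_kron, kron_neg, neg_neg,
      Matrix.one_kronecker_one]
  have hKcomm : (A ⊗ₖ B) * K = K * (A ⊗ₖ B) := by
    rw [hKdef, ← Matrix.mul_kronecker_mul, ← Matrix.mul_kronecker_mul, hAJ, hBJ]
  have hPX : Pproj dA dB * (A ⊗ₖ B) = (A ⊗ₖ B) * Pproj dA dB := by
    unfold Pproj
    rw [← hJAdef, ← hJBdef, ← hKdef, Matrix.smul_mul, Matrix.mul_smul]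
    congr 1
    rw [Matrix.sub_mul, Matrix.mul_sub, Matrix.one_mul, Matrix.mul_one, hKcomm]
  have hPP : Pproj dA dB * Pproj dA dB = Pproj dA dB := by
    unfold Pproj
    rw [← hJAdef, ← hJBdef, ← hKdef, Matrix.smul_mul, Matrix.mul_smul, smul_smul]
    have e : (1 - K) * (1 - K) = (2 : ℝ) • (1 - K) := by
      simp only [Matrix.sub_mul, Matrix.mul_sub, Matrix.one_mul, Matrix.mul_one, hKsq, two_smul]
      abel
    rw [e, smul_smul]
    norm_num
  have hRp : Rprod A B = Pproj dA dB * (A ⊗ₖ B) := by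
    unfold Rprod
    rw [Matrix.mul_assoc, ← hPX, ← Matrix.mul_assoc, hPP]
  have hKX : K * (A ⊗ₖ B) * (L ⊗ₖ R) = (A * JA * L) ⊗ₖ (B * JB * R) := by
    rw [← hKcomm, hKdef, ← Matrix.mul_kronecker_mul, ← Matrix.mul_kronecker_mul]
  have key : (Rprod A B * (L ⊗ₖ R)).trace
      = (1 / 2 : ℝ) * ((A ⊗ₖ B) * (L ⊗ₖ R)).trace
        - (1 / 2 : ℝ) * ((A * JA * L) ⊗ₖ (B * JB * R)).trace := by
    rw [hRp]
    unfold Pproj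
    rw [← hJAdef, ← hJBdef, ← hKdef, Matrix.smul_mul, Matrix.smul_mul, Matrix.trace_smul,
      Matrix.sub_mul, Matrix.sub_mul, Matrix.one_mul, Matrix.trace_sub, hKX]
    simp [smul_eq_mul]
    ring
  have hzA : (A * JA * L).trace = 0 := trace_AJL A JA L hA hL hJAt hAJ
  have hfac : ((A * JA * L) ⊗ₖ (B * JB * R)).trace = 0 := by
    rw [Matrix.trace_kronecker, hzA, zero_mul]
  have htr : ((A ⊗ₖ B) * (L ⊗ₖ R)).trace = (A * L).trace * (B * R).trace := by
    rw [← Matrix.mul_kronecker_mul, Matrix.trace_kronecker]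
  constructor
  · rw [key, hfac, htr]; ring
  · rw [key, hfac]; ring
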